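/- Let δ₁, δ₂ > 0. Suppose W^LDT = [w₁, w₂] minimizes ‖w₁‖² + ‖w₂‖² subject to δ_{y_i}(w_{y_i} - w_c)ᵀ h_i ≥ 1 for c ≠ y_i, and w* minimizes ‖w‖² subject to υ_i δ_{υ_i} w^T h_i ≥ 1 (the binary VS max-margin problem with δ₁ for label +1 and δ₂ for label -1). Then w₁ = w*/2 and w₂ = -w*/2, hence w₁ - w₂ = w*. -/

import Mathlib

open scoped InnerProductSpace

/-!
For two classes the LDT constraints on `w` only involve the difference `w 0 - w 1`, and they are
exactly the binary VS constraints on it. Hence `(w*/2, -w*/2)` is LDT-feasible with cost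
`‖w*‖²/2`, while by the parallelogram law every LDT-feasible pair costs
`‖w 0‖² + ‖w 1‖² = (‖w 0 - w 1‖² + ‖w 0 + w 1‖²)/2 ≥ ‖w*‖²/2`. At the LDT optimum equality holds
throughout, so `w 0 + w 1 = 0` and `w 0 - w 1` is a minimal-norm VS-feasible vector; by strict
convexity of the norm that vector is unique, so it is `w*`.
-/

section StrictConvexSpace

variable {F : Type*} [NormedAddCommGroup F] [NormedSpace ℝ F] [StrictConvexSpace ℝ F]

theorem Convex.eq_of_forall_norm_le {s : Set F} (hs : Convex ℝ s) {x y : F} (hx : x ∈ s)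
    (hy : y ∈ s) (hmin : ∀ z ∈ s, ‖x‖ ≤ ‖z‖) (hyx : ‖y‖ ≤ ‖x‖) : y = x := by
  by_contra hne
  have hnorm : ‖x‖ = ‖y‖ := le_antisymm (hmin y hy) hyx
  have hmid : (1 / 2 : ℝ) • (x + y) ∈ s := by
    simpa only [smul_add] using hs hx hy (by norm_num) (by norm_num) (by norm_num)
  exact (hmin _ hmid).not_gt ((norm_midpoint_lt_iff hnorm).2 (Ne.symm hne))

end StrictConvexSpace

variable {E : Type*} [NormedAddCommGroup E] [InnerProductSpace ℝ E]

theorem norm_sub_sq_add_norm_add_sq (a b : E) :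
    ‖a - b‖ ^ 2 + ‖a + b‖ ^ 2 = 2 * (‖a‖ ^ 2 + ‖b‖ ^ 2) := by
  rw [add_comm, parallelogram_law_with_norm ℝ]

theorem norm_sub_sq_le_two_mul (a b : E) : ‖a - b‖ ^ 2 ≤ 2 * (‖a‖ ^ 2 + ‖b‖ ^ 2) := by
  nlinarith [norm_sub_sq_add_norm_add_sq a b, sq_nonneg ‖a + b‖]

theorem add_eq_zero_of_two_mul_le_norm_sub_sq {a b : E}
    (hab : 2 * (‖a‖ ^ 2 + ‖b‖ ^ 2) ≤ ‖a - b‖ ^ 2) : a + b = 0 := by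
  rw [← norm_eq_zero, ← sq_eq_zero_iff]
  nlinarith [norm_sub_sq_add_norm_add_sq a b, sq_nonneg ‖a + b‖]

def marginFeasibleSet {ι : Type*} (h : ι → E) (c : ι → ℝ) : Set E :=
  {u | ∀ i, c i * ⟪u, h i⟫_ℝ ≥ 1}

theorem convex_marginFeasibleSet {ι : Type*} (h : ι → E) (c : ι → ℝ) :
    Convex ℝ (marginFeasibleSet h c) := by
  have hset : marginFeasibleSet h c = ⋂ i, {u | 1 ≤ c i * ⟪u, h i⟫_ℝ} := by
    ext u
    simp [marginFeasibleSet]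
  rw [hset]
  refine convex_iInter fun i => convex_halfSpace_ge ?_ 1
  exact ⟨fun u v => by rw [inner_add_left, mul_add],
    fun a u => by rw [real_inner_smul_left, smul_eq_mul]; ring⟩

theorem ldt_constraint_fin_two_iff (a : Fin 2 → E) (k : Fin 2) (δ : ℝ) (x : E) :
    (∀ c, c ≠ k → δ * ⟪a k - a c, x⟫_ℝ ≥ 1) ↔
      (if k = 0 then 1 else -1) * δ * ⟪a 0 - a 1, x⟫_ℝ ≥ 1 := by
  fin_cases k
  · simp
  · have hswap : ⟪a 1 - a 0, x⟫_ℝ = -⟪a 0 - a 1, x⟫_ℝ := by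
      rw [← inner_neg_left, neg_sub]
    simp [hswap]

theorem ldt_feasible_iff_sub_mem {n : ℕ} (h : Fin n → E) (y : Fin n → Fin 2) (δ : Fin 2 → ℝ)
    (w : Fin 2 → E) :
    (∀ i, ∀ c, c ≠ y i → δ (y i) * ⟪w (y i) - w c, h i⟫_ℝ ≥ 1) ↔
      w 0 - w 1 ∈ marginFeasibleSet h (fun i => (if y i = 0 then 1 else -1) * δ (y i)) :=
  forall_congr' fun i => ldt_constraint_fin_two_iff w (y i) (δ (y i)) (h i)

theorem ldt_equals_vs {d n : ℕ}
    (h : Fin n → EuclideanSpace ℝ (Fin d)) (y : Fin n → Fin 2)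
    (δ : Fin 2 → ℝ)
    (w : Fin 2 → EuclideanSpace ℝ (Fin d))
    (feas : ∀ i, ∀ c, c ≠ y i → δ (y i) * ⟪w (y i) - w c, h i⟫_ℝ ≥ 1)
    (opt : ∀ w' : Fin 2 → EuclideanSpace ℝ (Fin d),
      (∀ i, ∀ c, c ≠ y i → δ (y i) * ⟪w' (y i) - w' c, h i⟫_ℝ ≥ 1) →
      ‖w 0‖ ^ 2 + ‖w 1‖ ^ 2 ≤ ‖w' 0‖ ^ 2 + ‖w' 1‖ ^ 2)
    (υ : Fin n → ℝ) (hυ : ∀ i, υ i = if y i = 0 then 1 else -1)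
    (wstar : EuclideanSpace ℝ (Fin d))
    (feasS : ∀ i, υ i * (δ (y i) * ⟪wstar, h i⟫_ℝ) ≥ 1)
    (optS : ∀ w' : EuclideanSpace ℝ (Fin d),
      (∀ i, υ i * (δ (y i) * ⟪w', h i⟫_ℝ) ≥ 1) → ‖wstar‖ ^ 2 ≤ ‖w'‖ ^ 2) :
    w 0 = (1 / 2 : ℝ) • wstar ∧ w 1 = -((1 / 2 : ℝ) • wstar) ∧
    w 0 - w 1 = wstar := by
  obtain rfl : υ = fun i => if y i = 0 then 1 else -1 := funext hυ
  set S := marginFeasibleSet h (fun i => (if y i = 0 then 1 else -1) * δ (y i))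
  have memS : ∀ u, u ∈ S ↔ ∀ i, (if y i = 0 then 1 else -1) * (δ (y i) * ⟪u, h i⟫_ℝ) ≥ 1 :=
    fun u => by simp only [S, marginFeasibleSet, Set.mem_ofPred_eq, mul_assoc]
  set half : EuclideanSpace ℝ (Fin d) := (1 / 2 : ℝ) • wstar
  have hcost : 2 * (‖w 0‖ ^ 2 + ‖w 1‖ ^ 2) ≤ ‖wstar‖ ^ 2 := by
    have hhalf : ![half, -half] 0 - ![half, -half] 1 = wstar := by
      simp only [Matrix.cons_val_zero, Matrix.cons_val_one, sub_neg_eq_add, half]; module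
    have := opt ![half, -half] ((ldt_feasible_iff_sub_mem h y δ _).2 (hhalf ▸ (memS _).2 feasS))
    simp only [Matrix.cons_val_zero, Matrix.cons_val_one, norm_neg, half, norm_smul] at this
    norm_num at this
    linarith
  have hdiff : w 0 - w 1 ∈ S := (ldt_feasible_iff_sub_mem h y δ w).1 feas
  have hlower : ‖wstar‖ ^ 2 ≤ ‖w 0 - w 1‖ ^ 2 := optS _ ((memS _).1 hdiff)
  have hcenter : w 0 + w 1 = 0 := add_eq_zero_of_two_mul_le_norm_sub_sq (hcost.trans hlower)
  have hsub : w 0 - w 1 = wstar := by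
    refine (convex_marginFeasibleSet h _).eq_of_forall_norm_le ((memS _).2 feasS) hdiff
      (fun z hz => ?_) ?_
    · exact (sq_le_sq₀ (norm_nonneg _) (norm_nonneg _)).1 (optS z ((memS z).1 hz))
    · exact (sq_le_sq₀ (norm_nonneg _) (norm_nonneg _)).1
        ((norm_sub_sq_le_two_mul _ _).trans hcost)
  have hw1 : w 1 = -w 0 := eq_neg_of_add_eq_zero_right hcenter
  have hw0 : w 0 = half := by
    rw [hw1, sub_neg_eq_add, ← two_smul ℝ] at hsub
    simp only [half, ← hsub, smul_smul]
    norm_num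
  exact ⟨hw0, hw0 ▸ hw1, hsub⟩
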